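/- arXiv:math/0303171 — 2 statements merged into one kernel-verified Lean document; each statement's English description precedes it below -/
import Mathlib

section
/- Let E be an operator sequence space and F a Banach space equipped with its minimal operator sequence structure min(F)ⁿ = B(ℓ²ₙ, F). Then SB(E, min(F)) = B(E, F) isometrically: every bounded linear map T : E → F is sequentially bounded with ‖T‖_sb = ‖T‖. -/
open Matrix MeasureTheory

noncomputable section

/-- Action of a scalar `m × n` matrix on a column of vectors in `E`. -/
def matVec {E : Type*} [AddCommMonoid E] [Module ℂ E] {m n : ℕ}
    (α : Matrix (Fin m) (Fin n) ℂ) (x : Fin n → E) : Fin m → E :=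
  fun i => ∑ j, α i j • x j

/-- Operator norm of a scalar matrix viewed as a map `ℓ²ₙ → ℓ²ₘ`. -/
noncomputable def matOpNorm {m n : ℕ} (α : Matrix (Fin m) (Fin n) ℂ) : ℝ :=
  ‖LinearMap.toContinuousLinearMap (Matrix.toEuclideanLin α)‖

/-- A sequential norm over a normed space `E`: a norm on each `Eⁿ`, agreeing with the
norm of `E` at level one, and satisfying the three axioms of an operator sequence space. -/
structure SeqNorm (E : Type*) [NormedAddCommGroup E] [NormedSpace ℂ E] where
  N : ∀ n : ℕ, (Fin n → E) → ℝ
  norm_one : ∀ x : Fin 1 → E, N 1 x = ‖x 0‖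
  add_le : ∀ (n : ℕ) (x y : Fin n → E), N n (x + y) ≤ N n x + N n y
  smul_eq : ∀ (n : ℕ) (c : ℂ) (x : Fin n → E), N n (c • x) = ‖c‖ * N n x
  eq_zero : ∀ (n : ℕ) (x : Fin n → E), N n x = 0 → x = 0
  append_zero : ∀ (m n : ℕ) (x : Fin m → E),
    N (m + n) (Fin.append x (0 : Fin n → E)) = N m x
  append_sq : ∀ (m n : ℕ) (x : Fin m → E) (y : Fin n → E),
    N (m + n) (Fin.append x y) ^ 2 ≤ N m x ^ 2 + N n y ^ 2
  matrix_le : ∀ (m n : ℕ) (α : Matrix (Fin m) (Fin n) ℂ) (x : Fin n → E),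
    N m (matVec α x) ≤ matOpNorm α * N n x

/-- The minimal operator sequence norm at level `n`:
`‖x‖ₙ = sup{ ‖Σⱼ ξⱼ xⱼ‖ : ξ ∈ ℓ²ₙ, ‖ξ‖₂ ≤ 1 }`, identifying `min(E)ⁿ = B(ℓ²ₙ, E)`. -/
noncomputable def minSeqNorm {E : Type*} [NormedAddCommGroup E] [NormedSpace ℂ E]
    (n : ℕ) (x : Fin n → E) : ℝ :=
  sSup {r : ℝ | ∃ ξ : Fin n → ℂ, (∑ j, ‖ξ j‖ ^ 2) ≤ 1 ∧ r = ‖∑ j, ξ j • x j‖}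

/-- The maximal operator sequence norm at level `n`:
`‖x‖ₙ = inf{ ‖α‖ (Σⱼ ‖yⱼ‖²)^{1/2} : x = αy }`. -/
noncomputable def maxSeqNorm {E : Type*} [NormedAddCommGroup E] [NormedSpace ℂ E]
    (n : ℕ) (x : Fin n → E) : ℝ :=
  sInf {r : ℝ | ∃ (m : ℕ) (α : Matrix (Fin n) (Fin m) ℂ) (y : Fin m → E),
    x = matVec α y ∧ r = matOpNorm α * Real.sqrt (∑ j, ‖y j‖ ^ 2)}

/-- Cauchy–Schwarz for a sum of scalar multiples. -/
lemma norm_sum_smul_le' {F : Type*} [NormedAddCommGroup F] [NormedSpace ℂ F] {n : ℕ}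
    (ξ : Fin n → ℂ) (y : Fin n → F) :
    ‖∑ j, ξ j • y j‖ ≤ Real.sqrt (∑ j, ‖ξ j‖ ^ 2) * Real.sqrt (∑ j, ‖y j‖ ^ 2) := by
  calc ‖∑ j, ξ j • y j‖ ≤ ∑ j, ‖ξ j‖ * ‖y j‖ := by
        refine (norm_sum_le _ _).trans (le_of_eq ?_)
        simp [norm_smul]
    _ ≤ _ := Real.sum_mul_le_sqrt_mul_sqrt _ _ _

/-- Nonnegativity of a sequential norm. -/
lemma SeqNorm.nonneg {E : Type*} [NormedAddCommGroup E] [NormedSpace ℂ E]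
    (SE : SeqNorm E) (n : ℕ) (x : Fin n → E) : 0 ≤ SE.N n x := by
  have h0 : SE.N n (0 : Fin n → E) = 0 := by
    simpa using SE.smul_eq n 0 x
  have hneg : SE.N n (-x) = SE.N n x := by
    have := SE.smul_eq n (-1) x
    simpa using this
  have := SE.add_le n x (-x)
  rw [add_neg_cancel, h0, hneg] at this
  linarith

/-- The operator norm of a one-row matrix is at most the `ℓ²` norm of the row. -/
lemma matOpNorm_row_le {n : ℕ} (ξ : Fin n → ℂ) :
    matOpNorm (Matrix.of fun (_ : Fin 1) j => ξ j) ≤ Real.sqrt (∑ j, ‖ξ j‖ ^ 2) := by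
  apply ContinuousLinearMap.opNorm_le_bound _ (Real.sqrt_nonneg _)
  intro v
  have hv : ‖v‖ = Real.sqrt (∑ j, ‖v j‖ ^ 2) := by
    rw [EuclideanSpace.norm_eq]
  have happ : (LinearMap.toContinuousLinearMap
      (Matrix.toEuclideanLin (Matrix.of fun (_ : Fin 1) j => ξ j))) v =
      (WithLp.equiv 2 (Fin 1 → ℂ)).symm
        ((Matrix.of fun (_ : Fin 1) j => ξ j) *ᵥ (WithLp.equiv 2 (Fin n → ℂ)) v) := rfl
  rw [happ]
  have hnorm : ‖(WithLp.equiv 2 (Fin 1 → ℂ)).symm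
      ((Matrix.of fun (_ : Fin 1) j => ξ j) *ᵥ (WithLp.equiv 2 (Fin n → ℂ)) v)‖
      = ‖∑ j, ξ j * v j‖ := by
    rw [EuclideanSpace.norm_eq]
    simp [Matrix.mulVec, dotProduct, Fin.sum_univ_one,
      Real.sqrt_sq (norm_nonneg _)]
  rw [hnorm, hv]
  have := norm_sum_smul_le' (F := ℂ) ξ (fun j => v j)
  simpa [smul_eq_mul] using this

/-- Key contractivity estimate: a unit `ℓ²` vector contracts the sequential norm. -/
lemma sum_smul_le_seqNorm {E : Type*} [NormedAddCommGroup E] [NormedSpace ℂ E]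
    (SE : SeqNorm E) {n : ℕ} (ξ : Fin n → ℂ) (hξ : (∑ j, ‖ξ j‖ ^ 2) ≤ 1)
    (x : Fin n → E) : ‖∑ j, ξ j • x j‖ ≤ SE.N n x := by
  set α : Matrix (Fin 1) (Fin n) ℂ := Matrix.of fun _ j => ξ j with hα
  have h1 : SE.N 1 (matVec α x) = ‖∑ j, ξ j • x j‖ := by
    rw [SE.norm_one]
    rfl
  have h2 := SE.matrix_le 1 n α x
  have h3 : matOpNorm α ≤ 1 := by
    refine (matOpNorm_row_le ξ).trans ?_
    rw [show (1:ℝ) = Real.sqrt 1 by simp]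
    exact Real.sqrt_le_sqrt hξ
  have h4 : matOpNorm α * SE.N n x ≤ 1 * SE.N n x :=
    mul_le_mul_of_nonneg_right h3 (SE.nonneg n x)
  rw [h1] at h2
  linarith [h2, h4]

/-- `SB(E, min(F)) = B(E, F)` isometrically: for every bounded linear
`T : E → F`, the least constant bounding all amplifications `T^(n) : Eⁿ → min(F)ⁿ` is `‖T‖`. -/
theorem sb_into_min_eq_bounded {E F : Type*} [NormedAddCommGroup E] [NormedSpace ℂ E]
    [NormedAddCommGroup F] [NormedSpace ℂ F] [CompleteSpace E] [CompleteSpace F]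
    (SE : SeqNorm E) (T : E →L[ℂ] F) :
    IsLeast {c : ℝ | 0 ≤ c ∧ ∀ (n : ℕ) (x : Fin n → E),
      minSeqNorm n (fun j => T (x j)) ≤ c * SE.N n x} ‖T‖ := by
  constructor
  · refine ⟨norm_nonneg T, fun n x => ?_⟩
    apply Real.sSup_le
    · rintro r ⟨ξ, hξ, rfl⟩
      have heq : (∑ j, ξ j • T (x j)) = T (∑ j, ξ j • x j) := by
        rw [map_sum]
        simp
      rw [heq]
      calc ‖T (∑ j, ξ j • x j)‖ ≤ ‖T‖ * ‖∑ j, ξ j • x j‖ := T.le_opNorm _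
        _ ≤ ‖T‖ * SE.N n x :=
          mul_le_mul_of_nonneg_left (sum_smul_le_seqNorm SE ξ hξ x) (norm_nonneg T)
    · exact mul_nonneg (norm_nonneg T) (SE.nonneg n x)
  · rintro c ⟨hc0, hc⟩
    refine T.opNorm_le_bound hc0 fun x => ?_
    have h := hc 1 (fun _ => x)
    have hN : SE.N 1 (fun _ => x) = ‖x‖ := SE.norm_one _
    have hmem : ‖T x‖ ∈ {r : ℝ | ∃ ξ : Fin 1 → ℂ,
        (∑ j, ‖ξ j‖ ^ 2) ≤ 1 ∧ r = ‖∑ j, ξ j • (fun _ : Fin 1 => T x) j‖} := by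
      refine ⟨fun _ => 1, by simp, by simp⟩
    have hbdd : BddAbove {r : ℝ | ∃ ξ : Fin 1 → ℂ,
        (∑ j, ‖ξ j‖ ^ 2) ≤ 1 ∧ r = ‖∑ j, ξ j • (fun _ : Fin 1 => T x) j‖} := by
      refine ⟨‖T x‖, ?_⟩
      rintro r ⟨ξ, hξ, rfl⟩
      have := norm_sum_smul_le' ξ (fun _ : Fin 1 => T x)
      have h1 : Real.sqrt (∑ j, ‖ξ j‖ ^ 2) ≤ 1 := by
        rw [show (1:ℝ) = Real.sqrt 1 by simp]
        exact Real.sqrt_le_sqrt hξ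
      have h2 : Real.sqrt (∑ _j : Fin 1, ‖T x‖ ^ 2) = ‖T x‖ := by
        simp [Real.sqrt_sq (norm_nonneg _)]
      calc ‖∑ j, ξ j • (fun _ : Fin 1 => T x) j‖
          ≤ Real.sqrt (∑ j, ‖ξ j‖ ^ 2) * Real.sqrt (∑ _j : Fin 1, ‖T x‖ ^ 2) := this
        _ ≤ 1 * ‖T x‖ := by
            rw [h2]
            exact mul_le_mul_of_nonneg_right h1 (norm_nonneg _)
        _ = ‖T x‖ := one_mul _
    have hle : ‖T x‖ ≤ minSeqNorm 1 (fun j => T ((fun _ : Fin 1 => x) j)) :=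
      le_csSup hbdd hmem
    calc ‖T x‖ ≤ minSeqNorm 1 (fun j => T ((fun _ : Fin 1 => x) j)) := hle
      _ ≤ c * SE.N 1 (fun _ => x) := h
      _ = c * ‖x‖ := by rw [hN]
end
end

section
/- Let E be a Banach space equipped with its maximal operator sequence structure max(E) (with ‖x‖ₙ = inf{‖α‖‖y‖_{ℓ²ₘ(E)} : x = αy, α ∈ M_{n,m}, y ∈ Eᵐ}), and let F be any operator sequence space. Then SB(max(E), F) = B(E, F) isometrically: every bounded linear T : E → F is sequentially bounded from max(E) to F with ‖T‖_sb = ‖T‖. -/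
open Matrix MeasureTheory

noncomputable section

lemma matVec_one' {E : Type*} [AddCommMonoid E] [Module ℂ E] {n : ℕ} (x : Fin n → E) :
    matVec (1 : Matrix (Fin n) (Fin n) ℂ) x = x := by
  funext i
  simp [matVec, Matrix.one_apply, ite_smul, Finset.sum_ite_eq]

lemma matOpNorm_one_le' {n : ℕ} : matOpNorm (1 : Matrix (Fin n) (Fin n) ℂ) ≤ 1 := by
  unfold matOpNorm
  apply ContinuousLinearMap.opNorm_le_bound _ zero_le_one
  intro v
  have : (Matrix.toEuclideanLin (1 : Matrix (Fin n) (Fin n) ℂ)) v = v := by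
    simp [Matrix.toEuclideanLin_apply, Matrix.one_mulVec]
  simp [this]

lemma seqNorm_zero' {E : Type*} [NormedAddCommGroup E] [NormedSpace ℂ E]
    (SF : SeqNorm E) (n : ℕ) : SF.N n 0 = 0 := by
  have h := SF.smul_eq n 0 0
  simpa using h

lemma seqNorm_nonneg' {E : Type*} [NormedAddCommGroup E] [NormedSpace ℂ E]
    (SF : SeqNorm E) (n : ℕ) (x : Fin n → E) : 0 ≤ SF.N n x := by
  have h := SF.add_le n x (-x)
  have hneg : SF.N n (-x) = SF.N n x := by
    have := SF.smul_eq n (-1) x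
    simpa using this
  have hx0 : x + -x = 0 := by abel
  rw [hx0, seqNorm_zero', hneg] at h
  linarith

lemma seqNorm_le_l2 {E : Type*} [NormedAddCommGroup E] [NormedSpace ℂ E]
    (SF : SeqNorm E) (n : ℕ) (x : Fin n → E) :
    SF.N n x ≤ Real.sqrt (∑ j, ‖x j‖ ^ 2) := by
  induction n with
  | zero =>
      have h0 : SF.N 0 x = 0 := by
        have hx : x = 0 := funext fun i => i.elim0
        rw [hx]; exact seqNorm_zero' SF 0
      rw [h0]; exact Real.sqrt_nonneg _
  | succ k ih =>
      have hx : Fin.append (Fin.init x) (fun _ : Fin 1 => x (Fin.last k)) = x := by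
        funext i
        refine Fin.lastCases ?_ ?_ i
        · have h : Fin.last k = Fin.natAdd k (0 : Fin 1) := by
            ext; simp
          rw [h, Fin.append_right]
        · intro j
          have h : Fin.castSucc j = Fin.castAdd 1 j := rfl
          rw [h, Fin.append_left, Fin.init]
          exact congrArg x h
      have h1 := SF.append_sq k 1 (Fin.init x) (fun _ : Fin 1 => x (Fin.last k))
      rw [hx] at h1
      have h2 : SF.N 1 (fun _ : Fin 1 => x (Fin.last k)) = ‖x (Fin.last k)‖ :=
        SF.norm_one _
      have h3 := ih (Fin.init x)
      have h4 : SF.N k (Fin.init x) ^ 2 ≤ ∑ j, ‖Fin.init x j‖ ^ 2 := by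
        have hnn : (0 : ℝ) ≤ ∑ j, ‖Fin.init x j‖ ^ 2 :=
          Finset.sum_nonneg fun j _ => sq_nonneg _
        calc SF.N k (Fin.init x) ^ 2 ≤ Real.sqrt (∑ j, ‖Fin.init x j‖ ^ 2) ^ 2 := by
              apply pow_le_pow_left₀ (seqNorm_nonneg' SF k _) h3
          _ = ∑ j, ‖Fin.init x j‖ ^ 2 := Real.sq_sqrt hnn
      have h5 : SF.N (k + 1) x ^ 2 ≤ ∑ j, ‖x j‖ ^ 2 := by
        rw [Fin.sum_univ_castSucc]
        have : ∑ j : Fin k, ‖Fin.init x j‖ ^ 2 = ∑ j : Fin k, ‖x j.castSucc‖ ^ 2 := rfl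
        calc SF.N (k + 1) x ^ 2
            ≤ SF.N k (Fin.init x) ^ 2 + SF.N 1 (fun _ : Fin 1 => x (Fin.last k)) ^ 2 := h1
          _ ≤ (∑ j : Fin k, ‖x j.castSucc‖ ^ 2) + ‖x (Fin.last k)‖ ^ 2 := by
              rw [h2, ← this]; linarith
      calc SF.N (k + 1) x = Real.sqrt (SF.N (k + 1) x ^ 2) :=
            (Real.sqrt_sq (seqNorm_nonneg' SF _ _)).symm
        _ ≤ Real.sqrt (∑ j, ‖x j‖ ^ 2) := Real.sqrt_le_sqrt h5

/-- `SB(max(E), F) = B(E, F)` isometrically: for every bounded linear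
`T : E → F`, the least constant bounding all amplifications `T^(n) : max(E)ⁿ → Fⁿ` is `‖T‖`. -/
theorem sb_from_max_eq_bounded {E F : Type*} [NormedAddCommGroup E] [NormedSpace ℂ E]
    [NormedAddCommGroup F] [NormedSpace ℂ F] [CompleteSpace E] [CompleteSpace F]
    (SF : SeqNorm F) (T : E →L[ℂ] F) :
    IsLeast {c : ℝ | 0 ≤ c ∧ ∀ (n : ℕ) (x : Fin n → E),
      SF.N n (fun j => T (x j)) ≤ c * maxSeqNorm n x} ‖T‖ := by
  constructor
  · refine ⟨norm_nonneg T, fun n x => ?_⟩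
    set S := {r : ℝ | ∃ (m : ℕ) (α : Matrix (Fin n) (Fin m) ℂ) (y : Fin m → E),
      x = matVec α y ∧ r = matOpNorm α * Real.sqrt (∑ j, ‖y j‖ ^ 2)} with hS
    have hSne : S.Nonempty :=
      ⟨matOpNorm (1 : Matrix (Fin n) (Fin n) ℂ) * Real.sqrt (∑ j, ‖x j‖ ^ 2),
        n, 1, x, (matVec_one' x).symm, rfl⟩
    -- key estimate: for each r ∈ S, SF.N n (T ∘ x) ≤ ‖T‖ * r
    have hkey : ∀ r ∈ S, SF.N n (fun j => T (x j)) ≤ ‖T‖ * r := by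
      rintro r ⟨m, α, y, hxy, rfl⟩
      have hTx : (fun j => T (x j)) = matVec α (fun j => T (y j)) := by
        funext i
        simp [hxy, matVec, map_sum, ContinuousLinearMap.map_smul]
      rw [hTx]
      have h1 := SF.matrix_le n m α (fun j => T (y j))
      have h2 : SF.N m (fun j => T (y j)) ≤ ‖T‖ * Real.sqrt (∑ j, ‖y j‖ ^ 2) := by
        have h3 := seqNorm_le_l2 SF m (fun j => T (y j))
        have h4 : (∑ j, ‖T (y j)‖ ^ 2) ≤ ‖T‖ ^ 2 * ∑ j, ‖y j‖ ^ 2 := by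
          rw [Finset.mul_sum]
          apply Finset.sum_le_sum
          intro j _
          have := T.le_opNorm (y j)
          nlinarith [norm_nonneg (T (y j)), norm_nonneg (y j), norm_nonneg T]
        calc SF.N m (fun j => T (y j)) ≤ Real.sqrt (∑ j, ‖T (y j)‖ ^ 2) := h3
          _ ≤ Real.sqrt (‖T‖ ^ 2 * ∑ j, ‖y j‖ ^ 2) := Real.sqrt_le_sqrt h4
          _ = ‖T‖ * Real.sqrt (∑ j, ‖y j‖ ^ 2) := by
              rw [Real.sqrt_mul (sq_nonneg _), Real.sqrt_sq (norm_nonneg T)]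
      calc SF.N n (matVec α fun j => T (y j)) ≤ matOpNorm α * SF.N m (fun j => T (y j)) := h1
        _ ≤ matOpNorm α * (‖T‖ * Real.sqrt (∑ j, ‖y j‖ ^ 2)) :=
            mul_le_mul_of_nonneg_left h2 (norm_nonneg _)
        _ = ‖T‖ * (matOpNorm α * Real.sqrt (∑ j, ‖y j‖ ^ 2)) := by ring
    rcases (norm_nonneg T).eq_or_lt with hT | hT
    · -- ‖T‖ = 0, so T = 0
      have hT0 : T = 0 := by
        rw [← norm_eq_zero]; exact hT.symm
      have : (fun j => T (x j)) = (0 : Fin n → F) := by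
        funext j; simp [hT0]
      rw [this, seqNorm_zero', ← hT]
      simp
    · -- ‖T‖ > 0
      have hlb : SF.N n (fun j => T (x j)) / ‖T‖ ≤ sInf S := by
        apply le_csInf hSne
        intro r hr
        rw [div_le_iff₀ hT]
        calc SF.N n (fun j => T (x j)) ≤ ‖T‖ * r := hkey r hr
          _ = r * ‖T‖ := mul_comm _ _
      rw [div_le_iff₀ hT] at hlb
      calc SF.N n (fun j => T (x j)) ≤ sInf S * ‖T‖ := hlb
        _ = ‖T‖ * maxSeqNorm n x := by rw [mul_comm]; rfl
  · rintro c ⟨hc0, hc⟩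
    apply ContinuousLinearMap.opNorm_le_bound _ hc0
    intro v
    have h1 := hc 1 (fun _ => v)
    have h2 : SF.N 1 (fun _ : Fin 1 => T v) = ‖T v‖ := SF.norm_one _
    have h3 : maxSeqNorm 1 (fun _ : Fin 1 => v) ≤ ‖v‖ := by
      have hmem : matOpNorm (1 : Matrix (Fin 1) (Fin 1) ℂ) *
          Real.sqrt (∑ j : Fin 1, ‖v‖ ^ 2) ∈
          {r : ℝ | ∃ (m : ℕ) (α : Matrix (Fin 1) (Fin m) ℂ) (y : Fin m → E),
            (fun _ : Fin 1 => v) = matVec α y ∧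
            r = matOpNorm α * Real.sqrt (∑ j, ‖y j‖ ^ 2)} :=
        ⟨1, 1, fun _ => v, (matVec_one' _).symm, rfl⟩
      have hbdd : BddBelow {r : ℝ | ∃ (m : ℕ) (α : Matrix (Fin 1) (Fin m) ℂ) (y : Fin m → E),
          (fun _ : Fin 1 => v) = matVec α y ∧
          r = matOpNorm α * Real.sqrt (∑ j, ‖y j‖ ^ 2)} := by
        refine ⟨0, ?_⟩
        rintro r ⟨m, α, y, _, rfl⟩
        exact mul_nonneg (norm_nonneg _) (Real.sqrt_nonneg _)
      have h4 : matOpNorm (1 : Matrix (Fin 1) (Fin 1) ℂ) *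
          Real.sqrt (∑ j : Fin 1, ‖v‖ ^ 2) ≤ ‖v‖ := by
        have h5 : Real.sqrt (∑ j : Fin 1, ‖v‖ ^ 2) = ‖v‖ := by
          simp [Real.sqrt_sq (norm_nonneg v)]
        rw [h5]
        calc matOpNorm (1 : Matrix (Fin 1) (Fin 1) ℂ) * ‖v‖ ≤ 1 * ‖v‖ :=
              mul_le_mul_of_nonneg_right matOpNorm_one_le' (norm_nonneg v)
          _ = ‖v‖ := one_mul _
      exact le_trans (csInf_le hbdd hmem) h4
    have h6 : c * maxSeqNorm 1 (fun _ : Fin 1 => v) ≤ c * ‖v‖ :=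
      mul_le_mul_of_nonneg_left h3 hc0
    rw [h2] at h1
    linarith
end
end
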